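/- For each integer n > 2, set θₙ = π/(2n) and λₙ = 2cos²θₙ. Then the element (A_{λₙ} B₂^{-1})^{2n} equals the identity in SL₂(ℝ) up to sign (it equals ±I, and is the identity in PSL₂(ℝ)); hence the group generated by A_{λₙ} and B₂ is not free, admitting a relator with 4n syllables. -/
import Mathlib

open Real Matrix

/-- The matrix `A_λ = [[1,λ],[0,1]]` in `SL₂(ℝ)`. -/
def AmatR (lam : ℝ) : Matrix.SpecialLinearGroup (Fin 2) ℝ :=
  ⟨!![1, lam; 0, 1], by simp [Matrix.det_fin_two_of]⟩

/-- The matrix `B_μ = [[1,0],[μ,1]]` in `SL₂(ℝ)`. -/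
def BmatR (mu : ℝ) : Matrix.SpecialLinearGroup (Fin 2) ℝ :=
  ⟨!![1, 0; mu, 1], by simp [Matrix.det_fin_two_of]⟩

noncomputable def Nmat (c : ℝ) : Matrix (Fin 2) (Fin 2) ℝ := !![2*c+1, -(c+1); 2, -1]

lemma Nmat_sq (c : ℝ) : Nmat c * Nmat c = (2*c) • Nmat c - 1 := by
  ext i j
  fin_cases i <;> fin_cases j <;>
    simp [Nmat, Matrix.mul_apply, Fin.sum_univ_two, Matrix.one_apply] <;> ring

lemma Nmat_pow (β : ℝ) (hs : Real.sin β ≠ 0) :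
    ∀ k : ℕ, (Nmat (Real.cos β)) ^ (k+1) =
      (Real.sin ((k+1)*β) / Real.sin β) • Nmat (Real.cos β)
        - (Real.sin (k*β) / Real.sin β) • 1 := by
  intro k
  induction k with
  | zero => simp [div_self hs]
  | succ k ih =>
    have h2 : Real.sin ((k+2)*β) = 2 * Real.cos β * Real.sin ((k+1)*β) - Real.sin (k*β) := by
      have e1 : (k+2 : ℝ)*β = (k+1)*β + β := by ring
      have e2 : (k : ℝ)*β = (k+1)*β - β := by ring
      rw [e1, e2, Real.sin_add, Real.sin_sub]; ring
    have : (Nmat (Real.cos β)) ^ (k+2) = (Nmat (Real.cos β)) ^ (k+1) * Nmat (Real.cos β) := by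
      rw [pow_succ]
    rw [this, ih]
    rw [sub_mul, smul_mul_assoc, smul_mul_assoc, Nmat_sq, one_mul]
    push_cast
    have e : ((k:ℝ)+1+1) = (k:ℝ)+2 := by ring
    rw [e, h2, smul_sub]
    ext i j
    fin_cases i <;> fin_cases j <;>
      simp [Nmat, Matrix.one_apply] <;> field_simp <;> ring

lemma Nmat_pow_n (n : ℕ) (hn : 2 < n) :
    (Nmat (Real.cos (Real.pi / n))) ^ n = -1 := by
  have hn0 : (n : ℝ) ≠ 0 := by positivity
  have hβpos : 0 < Real.pi / n := by positivity
  have hβlt : Real.pi / n < Real.pi := by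
    rw [div_lt_iff₀ (by positivity)]
    nlinarith [Real.pi_pos, (show (3:ℝ) ≤ n by exact_mod_cast hn)]
  have hs : Real.sin (Real.pi / n) ≠ 0 :=
    ne_of_gt (Real.sin_pos_of_pos_of_lt_pi hβpos hβlt)
  obtain ⟨m, rfl⟩ : ∃ m, n = m + 1 := ⟨n - 1, by omega⟩
  rw [Nmat_pow _ hs m]
  have e1 : ((m:ℝ)+1) * (Real.pi / (m+1:ℕ)) = Real.pi := by
    push_cast; field_simp
  have e2 : (m:ℝ) * (Real.pi / (m+1:ℕ)) = Real.pi - Real.pi / (m+1:ℕ) := by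
    push_cast; field_simp; ring
  rw [e1, e2, Real.sin_pi, Real.sin_pi_sub, div_self hs]
  simp

lemma M_eq (n : ℕ) (hn : 2 < n) :
    ((AmatR (2 * Real.cos (Real.pi / (2 * n)) ^ 2) * (BmatR 2)⁻¹) : Matrix.SpecialLinearGroup (Fin 2) ℝ).1
      = -Nmat (Real.cos (Real.pi / n)) := by
  have hc : 2 * Real.cos (Real.pi / (2 * n)) ^ 2 = Real.cos (Real.pi / n) + 1 := by
    have := Real.cos_sq (Real.pi / (2 * n))
    rw [this]
    have : 2 * (Real.pi / (2 * (n:ℝ))) = Real.pi / n := by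
      field_simp
    rw [this]; ring
  rw [hc]
  have hB : ((BmatR 2)⁻¹ : Matrix.SpecialLinearGroup (Fin 2) ℝ).1 = !![1, 0; -2, 1] := by
    rw [Matrix.SpecialLinearGroup.coe_inv]
    simp [BmatR, Matrix.adjugate_fin_two]
  show (AmatR _).1 * ((BmatR 2)⁻¹).1 = _
  rw [hB]
  ext i j
  fin_cases i <;> fin_cases j <;>
    simp [AmatR, Nmat, Matrix.mul_apply, Fin.sum_univ_two] <;> ring

lemma key_pow (n : ℕ) (hn : 2 < n) :
    (AmatR (2 * Real.cos (Real.pi / (2 * n)) ^ 2) * (BmatR 2)⁻¹) ^ (2 * n) = 1 := by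
  apply Subtype.ext
  have : ((AmatR (2 * Real.cos (Real.pi / (2 * n)) ^ 2) * (BmatR 2)⁻¹) ^ (2 * n)).1
      = (((AmatR (2 * Real.cos (Real.pi / (2 * n)) ^ 2) * (BmatR 2)⁻¹)).1) ^ (2 * n) := by
    simp
  rw [this, M_eq n hn]
  have : (-Nmat (Real.cos (Real.pi / n))) ^ (2 * n)
      = ((Nmat (Real.cos (Real.pi / n))) ^ n) ^ 2 := by
    rw [neg_pow, ← pow_mul, mul_comm n 2]
    simp [Even.neg_one_pow (by exact even_two_mul n)]
  rw [this, Nmat_pow_n n hn]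
  simp

/-- For each integer `n > 2`, set `θₙ = π/(2n)` and `λₙ = 2cos²θₙ`. Then
`(A_{λₙ} B₂⁻¹)^{2n} = ±I` in `SL₂(ℝ)`, it is the identity in `PSL₂(ℝ)`, and hence the
group generated by `A_{λₙ}` and `B₂` in `PSL₂(ℝ)` is not free: the word
`(ab⁻¹)^{2n}`, which has `4n` syllables, is a nontrivial relator. -/
theorem stmt_9 (n : ℕ) (hn : 2 < n) :
    (((AmatR (2 * Real.cos (Real.pi / (2 * n)) ^ 2) * (BmatR 2)⁻¹) ^ (2 * n) = 1 ∨
      ((AmatR (2 * Real.cos (Real.pi / (2 * n)) ^ 2) * (BmatR 2)⁻¹) ^ (2 * n)).1 =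
        -(1 : Matrix (Fin 2) (Fin 2) ℝ))) ∧
    (QuotientGroup.mk' (Subgroup.center (Matrix.SpecialLinearGroup (Fin 2) ℝ)))
        ((AmatR (2 * Real.cos (Real.pi / (2 * n)) ^ 2) * (BmatR 2)⁻¹) ^ (2 * n)) = 1 ∧
    (FreeGroup.of true * (FreeGroup.of false)⁻¹) ^ (2 * n) ≠ (1 : FreeGroup Bool) ∧
    FreeGroup.lift
        (fun b => (QuotientGroup.mk' (Subgroup.center (Matrix.SpecialLinearGroup (Fin 2) ℝ)))
          (if b then AmatR (2 * Real.cos (Real.pi / (2 * n)) ^ 2) else BmatR 2))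
        ((FreeGroup.of true * (FreeGroup.of false)⁻¹) ^ (2 * n)) = 1 := by
  have key := key_pow n hn
  refine ⟨Or.inl key, by rw [key]; simp, ?_, ?_⟩
  · intro h
    have := congrArg (FreeGroup.lift (fun b => if b then Multiplicative.ofAdd (1:ℤ) else 1)) h
    simp [map_pow] at this
    have h2 : ((Multiplicative.ofAdd (1:ℤ)) ^ (2*n) : Multiplicative ℤ) = 1 := by
      simpa using this
    rw [← ofAdd_nsmul] at h2
    have h3 := Multiplicative.ofAdd.injective (h2.trans (ofAdd_zero).symm)
    have h4 : ((2*n : ℕ) : ℤ) = 0 := by simpa using h3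
    omega
  · rw [map_pow, _root_.map_mul, map_inv, FreeGroup.lift_apply_of, FreeGroup.lift_apply_of]
    simp only [Bool.if_false_right, Bool.if_true_left, if_pos trivial, if_neg (by decide : ¬ false = true),
      ← map_inv, ← _root_.map_mul, ← map_pow, key, _root_.map_one]
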